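/- Fix n ≥ 0. Let g be the (4n+6)-dimensional real vector space with basis {X_{4k+1}, X_{4k+2}, X_{4k+3}, X_{4k+4} : 0 ≤ k ≤ n} ∪ {Z_1, Z_2}, equipped with the alternating bilinear bracket whose only nonzero brackets among basis elements are, for each 0 ≤ k ≤ n: [X_{4k+1}, X_{4k+3}] = −Z_1/2, [X_{4k+1}, X_{4k+4}] = −Z_2/2, [X_{4k+2}, X_{4k+3}] = −Z_2/2, [X_{4k+2}, X_{4k+4}] = Z_1/2 (and the brackets obtained by antisymmetry). Then this bracket satisfies the Jacobi identity, g is a 2-step nilpotent Lie algebra whose center is spanned by {Z_1, Z_2}, and the linear map J determined by JX_{4k+1} = X_{4k+2}, JX_{4k+2} = −X_{4k+1}, JX_{4k+3} = −X_{4k+4}, JX_{4k+4} = X_{4k+3}, JZ_1 = −Z_2, JZ_2 = Z_1 is an abelian complex structure on g. -/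
import Mathlib


/-! **Statement 12.** The algebra `W_{4n+6}` of Example 3: it is a 2-step nilpotent
Lie algebra with center spanned by `{Z_1, Z_2}`, carrying an abelian complex
structure. -/

namespace ExampleThree

noncomputable section

/-- The underlying `(4n+6)`-dimensional real vector space: for each `0 ≤ k ≤ n`
the four coordinates of `X_{4k+1}, X_{4k+2}, X_{4k+3}, X_{4k+4}`, plus the two
coordinates of `Z_1, Z_2`. -/
abbrev G (n : ℕ) := (Fin (n + 1) → ℝ × ℝ × ℝ × ℝ) × ℝ × ℝ

/-- The standard basis of `ℝ × ℝ × ℝ × ℝ`. -/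
def e : Fin 4 → ℝ × ℝ × ℝ × ℝ := ![(1, 0, 0, 0), (0, 1, 0, 0), (0, 0, 1, 0), (0, 0, 0, 1)]

/-- The basis vector `X_{4k+1+i}` (for `i : Fin 4`). -/
def X {n : ℕ} (k : Fin (n + 1)) (i : Fin 4) : G n := (Pi.single k (e i), 0, 0)

/-- The basis vector `Z_1`. -/
def Z1 {n : ℕ} : G n := (0, 1, 0)

/-- The basis vector `Z_2`. -/
def Z2 {n : ℕ} : G n := (0, 0, 1)

/-- Coefficients of `Z_1` in the brackets `[X_{4k+1+i}, X_{4k+1+j}]`: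
`[X_{4k+1}, X_{4k+3}] = -Z_1/2`, `[X_{4k+2}, X_{4k+4}] = Z_1/2`. -/
def c : Matrix (Fin 4) (Fin 4) ℝ :=
  !![0, 0, -(1 / 2), 0; 0, 0, 0, 1 / 2; 1 / 2, 0, 0, 0; 0, -(1 / 2), 0, 0]

/-- Coefficients of `Z_2` in the brackets `[X_{4k+1+i}, X_{4k+1+j}]`:
`[X_{4k+1}, X_{4k+4}] = -Z_2/2`, `[X_{4k+2}, X_{4k+3}] = -Z_2/2`. -/
def d : Matrix (Fin 4) (Fin 4) ℝ :=
  !![0, 0, 0, -(1 / 2); 0, 0, -(1 / 2), 0; 0, 1 / 2, 0, 0; 1 / 2, 0, 0, 0]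

/-- Coordinates of `u` with respect to the basis vectors `X k 0, …, X k 3`. -/
def coord {n : ℕ} (u : G n) (k : Fin (n + 1)) : Fin 4 → ℝ :=
  ![(u.1 k).1, (u.1 k).2.1, (u.1 k).2.2.1, (u.1 k).2.2.2]

lemma decomp {n : ℕ} (u : G n) :
    u = (∑ k, ∑ i, coord u k i • X k i) + u.2.1 • Z1 + u.2.2 • Z2 := by
  rw [Prod.ext_iff, Prod.ext_iff]
  refine ⟨?_, ?_, ?_⟩
  · simp only [Prod.fst_add, Prod.fst_sum, Prod.smul_fst, X, Z1, Z2, smul_zero, add_zero]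
    funext l
    simp only [Finset.sum_apply, Pi.smul_apply, Pi.single_apply, smul_ite, smul_zero]
    rw [Finset.sum_comm]
    simp only [Finset.sum_ite_eq, Finset.mem_univ, if_true]
    rw [Fin.sum_univ_four]
    simp [coord, e, Prod.ext_iff]
  · simp [Prod.snd_add, Prod.snd_sum, Prod.smul_snd, X, Z1, Z2]
  · simp [Prod.snd_add, Prod.snd_sum, Prod.smul_snd, X, Z1, Z2]

lemma induction_on {n : ℕ} {P : G n → Prop}
    (hX : ∀ k i, P (X k i)) (h1 : P Z1) (h2 : P Z2)
    (hadd : ∀ u v, P u → P v → P (u + v))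
    (hsmul : ∀ (r : ℝ) u, P u → P (r • u)) (u : G n) : P u := by
  have h0 : P 0 := by simpa using hsmul 0 Z1 h1
  rw [decomp u]
  refine hadd _ _ (hadd _ _ ?_ (hsmul _ _ h1)) (hsmul _ _ h2)
  refine Finset.sum_induction _ _ hadd h0 fun k _ => ?_
  exact Finset.sum_induction _ _ hadd h0 fun i _ => hsmul _ _ (hX k i)

set_option maxHeartbeats 1600000 in
/-- Let `B` be the (necessarily unique) bilinear bracket on `G n` whose only nonzero
values on basis elements are, for each `k`: `[X_{4k+1}, X_{4k+3}] = -Z_1/2`,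
`[X_{4k+1}, X_{4k+4}] = -Z_2/2`, `[X_{4k+2}, X_{4k+3}] = -Z_2/2`,
`[X_{4k+2}, X_{4k+4}] = Z_1/2` (and the brackets obtained by antisymmetry).
Then `B` is alternating and satisfies the Jacobi identity, the resulting Lie algebra
is 2-step nilpotent with center spanned by `{Z_1, Z_2}`, and the linear map `J`
determined by `J X_{4k+1} = X_{4k+2}`, `J X_{4k+2} = -X_{4k+1}`,
`J X_{4k+3} = -X_{4k+4}`, `J X_{4k+4} = X_{4k+3}`, `J Z_1 = -Z_2`, `J Z_2 = Z_1`
is an abelian complex structure. -/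
theorem exampleThree_two_step_abelian_complex
    (n : ℕ)
    (B : G n →ₗ[ℝ] G n →ₗ[ℝ] G n)
    (hXX : ∀ (k l : Fin (n + 1)) (i j : Fin 4),
      B (X k i) (X l j) = if k = l then c i j • Z1 + d i j • Z2 else 0)
    (hZ1 : ∀ (k : Fin (n + 1)) (i : Fin 4), B (X k i) Z1 = 0 ∧ B Z1 (X k i) = 0)
    (hZ2 : ∀ (k : Fin (n + 1)) (i : Fin 4), B (X k i) Z2 = 0 ∧ B Z2 (X k i) = 0)
    (hZZ : B (Z1 : G n) Z1 = 0 ∧ B (Z1 : G n) Z2 = 0 ∧ B (Z2 : G n) Z1 = 0 ∧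
      B (Z2 : G n) Z2 = 0)
    (J : G n →ₗ[ℝ] G n)
    (hJ1 : ∀ k, J (X k 0) = X k 1) (hJ2 : ∀ k, J (X k 1) = -X k 0)
    (hJ3 : ∀ k, J (X k 2) = -X k 3) (hJ4 : ∀ k, J (X k 3) = X k 2)
    (hJZ1 : J (Z1 : G n) = -Z2) (hJZ2 : J (Z2 : G n) = Z1) :
    -- the bracket is alternating
    (∀ u : G n, B u u = 0) ∧
    -- the Jacobi identity holds
    (∀ u v w : G n, B (B u v) w + B (B v w) u + B (B w u) v = 0) ∧
    -- the Lie algebra is 2-step nilpotent: `[g, g]` is central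
    (∀ u v w : G n, B (B u v) w = 0) ∧
    -- the center is spanned by `{Z_1, Z_2}`
    ({u : G n | ∀ v : G n, B u v = 0} =
      (Submodule.span ℝ ({Z1, Z2} : Set (G n)) : Set (G n))) ∧
    -- `J` is a complex structure
    (∀ u : G n, J (J u) = -u) ∧
    -- `J` is abelian
    (∀ u v : G n, B (J u) (J v) = B u v) := by
  -- Brackets with `Z1, Z2` vanish on either side.
  have hz : ∀ u : G n, B u Z1 = 0 ∧ B u Z2 = 0 ∧ B Z1 u = 0 ∧ B Z2 u = 0 := by
    intro u
    induction u using induction_on with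
    | hX k i => exact ⟨(hZ1 k i).1, (hZ2 k i).1, (hZ1 k i).2, (hZ2 k i).2⟩
    | h1 => exact ⟨hZZ.1, hZZ.2.1, hZZ.1, hZZ.2.2.1⟩
    | h2 => exact ⟨hZZ.2.2.1, hZZ.2.2.2, hZZ.2.1, hZZ.2.2.2⟩
    | hadd u v hu hv =>
      simp [map_add, LinearMap.add_apply, hu.1, hu.2.1, hu.2.2.1, hu.2.2.2,
        hv.1, hv.2.1, hv.2.2.1, hv.2.2.2]
    | hsmul r u hu =>
      simp [map_smul, LinearMap.smul_apply, hu.1, hu.2.1, hu.2.2.1, hu.2.2.2]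
  -- Antisymmetry.
  have hanti : ∀ u v : G n, B u v + B v u = 0 := by
    intro u v
    induction u using induction_on with
    | hX k i =>
      induction v using induction_on with
      | hX l j =>
        rw [hXX, hXX]
        rcases eq_or_ne k l with rfl | h
        · simp only [if_true]
          fin_cases i <;> fin_cases j <;> norm_num [c, d] <;> module
        · simp [h, h.symm]
      | h1 => simp [(hZ1 k i).1, (hZ1 k i).2]
      | h2 => simp [(hZ2 k i).1, (hZ2 k i).2]
      | hadd u v hu hv =>
        simp only [map_add, LinearMap.add_apply]
        rw [add_add_add_comm, hu, hv, add_zero]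
      | hsmul r u hu =>
        simp only [map_smul, LinearMap.smul_apply, ← smul_add, hu, smul_zero]
    | h1 => simp [(hz v).1, (hz v).2.2.1]
    | h2 => simp [(hz v).2.1, (hz v).2.2.2]
    | hadd u w hu hw =>
      simp only [map_add, LinearMap.add_apply]
      rw [add_add_add_comm, hu, hw, add_zero]
    | hsmul r u hu =>
      simp only [map_smul, LinearMap.smul_apply, ← smul_add, hu, smul_zero]
  -- The bracket is alternating.
  have halt : ∀ u : G n, B u u = 0 := by
    intro u
    have h2 : (2 : ℝ) • B u u = 0 := by rw [two_smul]; exact hanti u u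
    rcases smul_eq_zero.mp h2 with h | h
    · norm_num at h
    · exact h
  -- Every bracket lies in the span of `{Z1, Z2}`.
  have hmem : ∀ u v : G n, B u v ∈ Submodule.span ℝ ({Z1, Z2} : Set (G n)) := by
    have hZ1mem : (Z1 : G n) ∈ Submodule.span ℝ ({Z1, Z2} : Set (G n)) :=
      Submodule.subset_span (by simp)
    have hZ2mem : (Z2 : G n) ∈ Submodule.span ℝ ({Z1, Z2} : Set (G n)) :=
      Submodule.subset_span (by simp)
    intro u v
    induction u using induction_on with
    | hX k i =>
      induction v using induction_on with
      | hX l j =>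
        rw [hXX]
        split
        · exact Submodule.add_mem _ (Submodule.smul_mem _ _ hZ1mem)
            (Submodule.smul_mem _ _ hZ2mem)
        · exact Submodule.zero_mem _
      | h1 => rw [(hZ1 k i).1]; exact Submodule.zero_mem _
      | h2 => rw [(hZ2 k i).1]; exact Submodule.zero_mem _
      | hadd u v hu hv =>
        rw [map_add]
        exact Submodule.add_mem _ hu hv
      | hsmul r u hu =>
        rw [map_smul]
        exact Submodule.smul_mem _ _ hu
    | h1 => rw [(hz v).2.2.1]; exact Submodule.zero_mem _
    | h2 => rw [(hz v).2.2.2]; exact Submodule.zero_mem _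
    | hadd u w hu hw =>
      rw [map_add, LinearMap.add_apply]
      exact Submodule.add_mem _ hu hw
    | hsmul r u hu =>
      rw [map_smul, LinearMap.smul_apply]
      exact Submodule.smul_mem _ _ hu
  -- 2-step nilpotency.
  have h2step : ∀ u v w : G n, B (B u v) w = 0 := by
    intro u v w
    obtain ⟨a, b, hab⟩ := Submodule.mem_span_pair.mp (hmem u v)
    rw [← hab]
    simp [map_add, LinearMap.add_apply, map_smul, LinearMap.smul_apply,
      (hz w).2.2.1, (hz w).2.2.2]
  -- A formula for `B u (X k j)`.
  have hBuX : ∀ (u : G n) (k : Fin (n + 1)) (j : Fin 4),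
      B u (X k j) = (∑ i, coord u k i * c i j) • Z1 + (∑ i, coord u k i * d i j) • Z2 := by
    intro u k j
    conv_lhs => rw [decomp u]
    simp only [map_add, map_smul, map_sum, LinearMap.add_apply, LinearMap.smul_apply,
      LinearMap.sum_apply, hXX, (hZ1 k j).2, (hZ2 k j).2, smul_zero, add_zero]
    simp only [smul_ite, smul_zero]
    rw [Finset.sum_comm]
    simp only [Finset.sum_ite_eq', Finset.mem_univ, if_true]
    simp only [smul_add, smul_smul, Finset.sum_add_distrib, Finset.sum_smul]
  -- The center.
  have hcenter : {u : G n | ∀ v : G n, B u v = 0} =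
      (Submodule.span ℝ ({Z1, Z2} : Set (G n)) : Set (G n)) := by
    ext u
    constructor
    · intro hu
      have key : ∀ (k : Fin (n + 1)) (i : Fin 4), coord u k i = 0 := by
        intro k i
        have h0 := hu (X k 0)
        have h2 := hu (X k 2)
        rw [hBuX] at h0 h2
        rw [Fin.sum_univ_four, Fin.sum_univ_four] at h0
        rw [Fin.sum_univ_four, Fin.sum_univ_four] at h2
        norm_num [c, d, Matrix.vecHead, Matrix.vecTail] at h0 h2
        have e0 := congrArg (fun w : G n => w.2.1) h0
        have e0' := congrArg (fun w : G n => w.2.2) h0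
        have e2 := congrArg (fun w : G n => w.2.1) h2
        have e2' := congrArg (fun w : G n => w.2.2) h2
        simp [Z1, Z2, coord, Prod.smul_snd, Prod.snd_add] at e0 e0' e2 e2'
        fin_cases i <;> simp [coord] <;> linarith
      show u ∈ Submodule.span ℝ ({Z1, Z2} : Set (G n))
      refine Submodule.mem_span_pair.mpr ⟨u.2.1, u.2.2, ?_⟩
      conv_rhs => rw [decomp u]
      simp [key]
    · intro hu v
      obtain ⟨a, b, hab⟩ := Submodule.mem_span_pair.mp hu
      rw [← hab]
      simp [map_add, LinearMap.add_apply, map_smul, LinearMap.smul_apply,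
        (hz v).2.2.1, (hz v).2.2.2]
  -- `J` is a complex structure.
  have hJJ : ∀ u : G n, J (J u) = -u := by
    intro u
    induction u using induction_on with
    | hX k i => fin_cases i <;> simp [hJ1, hJ2, hJ3, hJ4]
    | h1 => rw [hJZ1, map_neg, hJZ2]
    | h2 => rw [hJZ2, hJZ1]
    | hadd u v hu hv => rw [map_add, map_add, hu, hv, neg_add]
    | hsmul r u hu => rw [map_smul, map_smul, hu, smul_neg]
  -- `J` is abelian.
  have habel : ∀ u v : G n, B (J u) (J v) = B u v := by
    intro u v
    induction u using induction_on with
    | hX k i =>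
      induction v using induction_on with
      | hX l j =>
        rcases eq_or_ne k l with rfl | h
        · fin_cases i <;> fin_cases j <;>
            simp [hJ1, hJ2, hJ3, hJ4, hXX, c, d, Matrix.vecHead, Matrix.vecTail]
        · have t : ∀ i j : Fin 4, B (X k i) (X l j) = 0 := fun i j => by simp [hXX, h]
          fin_cases i <;> fin_cases j <;> simp [hJ1, hJ2, hJ3, hJ4, t]
      | h1 => rw [hJZ1, map_neg, (hz _).2.1, (hZ1 k i).1, neg_zero]
      | h2 => rw [hJZ2, (hz _).1, (hZ2 k i).1]
      | hadd u v hu hv => rw [map_add, map_add, map_add, hu, hv]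
      | hsmul r u hu => rw [map_smul, map_smul, map_smul, hu]
    | h1 =>
      rw [hJZ1, map_neg, LinearMap.neg_apply, (hz _).2.2.2, (hz v).2.2.1, neg_zero]
    | h2 =>
      rw [hJZ2, (hz _).2.2.1, (hz v).2.2.2]
    | hadd u w hu hw =>
      simp only [map_add, LinearMap.add_apply, hu, hw]
    | hsmul r u hu =>
      simp only [map_smul, LinearMap.smul_apply, hu]
  refine ⟨halt, ?_, h2step, hcenter, hJJ, habel⟩
  intro u v w
  simp [h2step]

end

end ExampleThree
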